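/- Let R = ℂ[x,x⁻¹,y,y⁻¹]. Let A, B, C ⊆ R be the ℂ-subspaces spanned by the monomials xⁱyʲ with, respectively: i ≥ 0 and j ≥ 0 (A); i ≥ 0 and j ∈ ℤ (B); i ∈ ℤ and j ≥ 0 (C). Then for every natural number m, {f ∈ C : xᵐy⁻¹·f·(A + yC) ⊆ B + C} = x⁻ᵐA + yC. (For m = 0 this is the self-duality of the lattice (A + wC)/wC for ⟨1_z⟩ on the chart U_{σ₃}; for m = n, n−1, 1 it computes the dual lattices in the ⟨1_z⟩- and ⟨z⟩-columns of d¹ on the charts U_{σ₂} and U_{σ₃}.) -/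

import Mathlib

/-!
Each of the subspaces `A`, `B`, `C`, `yC`, `x⁻ᵐA` is the span of the monomials whose exponents lie
in a region of `ℤ²`, and multiplication by a monomial translates regions. So `f ∈ C` satisfies the
condition exactly when every exponent `p` of `f` has `(m, -1) + p + q` in the region of `B + C`
for all exponents `q` of `A + yC`, and that is a statement about lattice points only.
-/

noncomputable section

/-- The Laurent polynomial ring `ℂ[x,x⁻¹,y,y⁻¹]` as the monoid algebra of `ℤ × ℤ` over `ℂ`. -/
abbrev LaurentR : Type := AddMonoidAlgebra ℂ (ℤ × ℤ)

/-- The monomial `xⁱyʲ`. -/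
def mono (i j : ℤ) : LaurentR := AddMonoidAlgebra.single (i, j) 1

/-- `x` -/
def xx : LaurentR := mono 1 0
/-- `x⁻¹` -/
def xxInv : LaurentR := mono (-1) 0
/-- `y` -/
def yy : LaurentR := mono 0 1
/-- `y⁻¹` -/
def yyInv : LaurentR := mono 0 (-1)

/-- `A = ℂ[x,y]`, the ℂ-subspace spanned by monomials `xⁱyʲ` with `i ≥ 0`, `j ≥ 0`. -/
def Asub : Submodule ℂ LaurentR := Submodule.span ℂ {r | ∃ (i : ℕ) (j : ℕ), r = mono i j}
/-- `B = ℂ[x,y,y⁻¹]`, the ℂ-subspace spanned by monomials `xⁱyʲ` with `i ≥ 0`, `j ∈ ℤ`. -/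
def Bsub : Submodule ℂ LaurentR := Submodule.span ℂ {r | ∃ (i : ℕ) (j : ℤ), r = mono i j}
/-- `C = ℂ[x,x⁻¹,y]`, the ℂ-subspace spanned by monomials `xⁱyʲ` with `i ∈ ℤ`, `j ≥ 0`. -/
def Csub : Submodule ℂ LaurentR := Submodule.span ℂ {r | ∃ (i : ℤ) (j : ℕ), r = mono i j}
/-- `ℂ[y,y⁻¹]`, the ℂ-subspace spanned by the monomials `yʲ`, `j ∈ ℤ`. -/
def Dy : Submodule ℂ LaurentR := Submodule.span ℂ {r | ∃ (j : ℤ), r = mono 0 j}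
/-- `ℂ[x,x⁻¹]`, the ℂ-subspace spanned by the monomials `xⁱ`, `i ∈ ℤ`. -/
def Dx : Submodule ℂ LaurentR := Submodule.span ℂ {r | ∃ (i : ℤ), r = mono i 0}

/-- `u·L = {u·f : f ∈ L}` as a `ℂ`-submodule of `LaurentR`. -/
def dil (u : LaurentR) (L : Submodule ℂ LaurentR) : Submodule ℂ LaurentR :=
  L.map (LinearMap.mulLeft ℂ u)

open scoped Pointwise

namespace AddMonoidAlgebra

variable {R S G : Type*}

theorem supported_union [Semiring R] [Semiring S] [Module R S] (s t : Set G) :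
    supported R S (s ∪ t) = supported R S s ⊔ supported R S t := by
  simp only [supported_eq_map, Finsupp.supported_union, Submodule.map_sup]

theorem supported_inter [Semiring R] [Semiring S] [Module R S] (s t : Set G) :
    supported R S (s ∩ t) = supported R S s ⊓ supported R S t := by
  ext f
  exact Set.subset_inter_iff

theorem single_mem_supported [Semiring R] [Semiring S] [Module R S] {s : Set G} {a : G}
    (b : S) (h : a ∈ s) : single a b ∈ supported R S s :=
  Finsupp.single_mem_supported R b h

theorem map_mulLeft_single_one_supported [CommSemiring R] [AddGroup G] (a : G) (s : Set G) :
    (supported R R s).map (LinearMap.mulLeft R (single a 1 : R[G])) =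
      supported R R (a +ᵥ s) := by
  ext f
  simp only [Submodule.mem_map, LinearMap.mulLeft_apply, mem_supported',
    Set.mem_vadd_set_iff_neg_vadd_mem]
  constructor
  · rintro ⟨g, hg, rfl⟩ p hp
    rw [coeff_single_mul_apply, one_mul]
    exact hg _ hp
  · intro hf
    refine ⟨single (-a) 1 * f, fun q hq => ?_, ?_⟩
    · rw [coeff_single_mul_apply, one_mul]
      exact hf _ (by simpa using hq)
    · rw [← mul_assoc, single_mul_single, add_neg_cancel, one_mul, ← one_def, one_mul]

theorem forall_single_mul_mul_mem_supported_iff [Semiring R] [AddGroup G] {t u : Set G} (c : G)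
    (f : R[G]) :
    (∀ g ∈ supported R R t, single c 1 * (f * g) ∈ supported R R u) ↔
      f ∈ supported R R {p | ∀ q ∈ t, c + (p + q) ∈ u} := by
  classical
  constructor
  · intro h
    refine mem_supported'.mpr fun p hp => ?_
    obtain ⟨q, hq, hpq⟩ := Set.not_subset.mp hp
    simpa [coeff_single_mul_apply, coeff_mul_single_apply] using
      mem_supported'.mp (h _ (single_mem_supported 1 hq)) _ hpq
  · intro hf g hg x hx
    obtain ⟨y, hy, rfl⟩ := Finset.mem_image.mp (support_coeff_single_mul_subset _ _ _ hx)
    obtain ⟨p, hp, q, hq, rfl⟩ := Finset.mem_add.mp (support_coeff_mul_subset _ _ hy)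
    exact hf hp q (hg hq)

end AddMonoidAlgebra

open AddMonoidAlgebra

theorem mono_mul_mono (i j k l : ℤ) : mono i j * mono k l = mono (i + k) (j + l) := by
  rw [mono, mono, single_mul_single, one_mul]
  rfl

theorem mono_pow (i j : ℤ) (n : ℕ) : mono i j ^ n = mono (n * i) (n * j) := by
  rw [mono, single_pow, one_pow, Prod.smul_mk, nsmul_eq_mul, nsmul_eq_mul]
  rfl

theorem dil_mono_supported (i j : ℤ) (s : Set (ℤ × ℤ)) :
    dil (mono i j) (supported ℂ ℂ s) = supported ℂ ℂ ((i, j) +ᵥ s) :=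
  map_mulLeft_single_one_supported _ s

theorem Asub_eq_supported : Asub = supported ℂ ℂ {p | 0 ≤ p.1 ∧ 0 ≤ p.2} := by
  rw [Asub, supported_eq_span_single]
  congr 1
  ext r
  constructor
  · rintro ⟨i, j, rfl⟩
    exact ⟨(i, j), by simp, rfl⟩
  · rintro ⟨⟨i, j⟩, ⟨hi, hj⟩, rfl⟩
    lift i to ℕ using hi
    lift j to ℕ using hj
    exact ⟨i, j, rfl⟩

theorem Bsub_eq_supported : Bsub = supported ℂ ℂ {p | 0 ≤ p.1} := by
  rw [Bsub, supported_eq_span_single]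
  congr 1
  ext r
  constructor
  · rintro ⟨i, j, rfl⟩
    exact ⟨(i, j), by simp, rfl⟩
  · rintro ⟨⟨i, j⟩, hi, rfl⟩
    lift i to ℕ using hi
    exact ⟨i, j, rfl⟩

theorem Csub_eq_supported : Csub = supported ℂ ℂ {p | 0 ≤ p.2} := by
  rw [Csub, supported_eq_span_single]
  congr 1
  ext r
  constructor
  · rintro ⟨i, j, rfl⟩
    exact ⟨(i, j), by simp, rfl⟩
  · rintro ⟨⟨i, j⟩, hj, rfl⟩
    lift j to ℕ using hj
    exact ⟨i, j, rfl⟩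

theorem Asub_sup_dil_yy_Csub :
    Asub ⊔ dil yy Csub = supported ℂ ℂ {p | 0 ≤ p.1 ∧ 0 ≤ p.2 ∨ 1 ≤ p.2} := by
  rw [Asub_eq_supported, Csub_eq_supported, yy, dil_mono_supported, ← supported_union]
  congr 1
  ext ⟨i, j⟩
  simp [Set.mem_vadd_set_iff_neg_vadd_mem]

theorem Bsub_sup_Csub : Bsub ⊔ Csub = supported ℂ ℂ {p | 0 ≤ p.1 ∨ 0 ≤ p.2} := by
  rw [Bsub_eq_supported, Csub_eq_supported, ← supported_union]
  rfl

theorem dil_xxInv_pow_Asub_sup_dil_yy_Csub (m : ℕ) :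
    dil (xxInv ^ m) Asub ⊔ dil yy Csub =
      supported ℂ ℂ {p | -(m : ℤ) ≤ p.1 ∧ 0 ≤ p.2 ∨ 1 ≤ p.2} := by
  rw [Asub_eq_supported, Csub_eq_supported, xxInv, yy, mono_pow, dil_mono_supported,
    dil_mono_supported, ← supported_union]
  congr 1
  ext ⟨i, j⟩
  simp only [mul_neg, mul_one, mul_zero, Set.mem_union, Set.mem_vadd_set_iff_neg_vadd_mem,
    Prod.neg_mk, neg_neg, neg_zero, vadd_eq_add, Prod.mk_add_mk, zero_add, Set.mem_ofPred_eq]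
  omega

theorem xx_pow_mul_yyInv (m : ℕ) : xx ^ m * yyInv = mono m (-1) := by
  rw [xx, yyInv, mono_pow, mono_mul_mono]
  simp

theorem dual_exponent_set_eq (m : ℕ) :
    {p : ℤ × ℤ | 0 ≤ p.2} ∩
        {p | ∀ q ∈ {q : ℤ × ℤ | 0 ≤ q.1 ∧ 0 ≤ q.2 ∨ 1 ≤ q.2},
          ((m : ℤ), -1) + (p + q) ∈ {r : ℤ × ℤ | 0 ≤ r.1 ∨ 0 ≤ r.2}} =
      {p | -(m : ℤ) ≤ p.1 ∧ 0 ≤ p.2 ∨ 1 ≤ p.2} := by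
  ext ⟨i, j⟩
  simp only [Set.mem_inter_iff, Set.mem_ofPred_eq, Prod.forall, Prod.mk_add_mk]
  constructor
  · rintro ⟨hj, hdual⟩
    -- testing against `x^(-i-m-1) ∈ A` lands on the exponent `(-1, -1)`, outside `B + C`
    have := hdual (-i - m - 1) 0
    omega
  · intro hij
    exact ⟨by omega, fun k l hkl => by omega⟩

/-- For every `m : ℕ`,
`{f ∈ C : xᵐy⁻¹·f·(A + yC) ⊆ B + C} = x⁻ᵐA + yC`. -/
theorem stmt_13 (m : ℕ) :
    {f : LaurentR | f ∈ Csub ∧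
        ∀ g ∈ Asub ⊔ dil yy Csub, xx ^ m * yyInv * (f * g) ∈ Bsub ⊔ Csub}
      = ((dil (xxInv ^ m) Asub ⊔ dil yy Csub : Submodule ℂ LaurentR) : Set LaurentR) := by
  ext f
  rw [Asub_sup_dil_yy_Csub, Bsub_sup_Csub, dil_xxInv_pow_Asub_sup_dil_yy_Csub, xx_pow_mul_yyInv,
    Csub_eq_supported, mono, Set.mem_ofPred_eq, forall_single_mul_mul_mem_supported_iff,
    ← Submodule.mem_inf, ← supported_inter, dual_exponent_set_eq]
  rfl
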